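/- arXiv:2303.04908 — 2 statements merged into one kernel-verified Lean document; each statement's English description precedes it below -/
import Mathlib

section
/- Let Z : ℕ → ℝ satisfy Z(t+1) = max(Z(t) - c_max, 0) + c·α(t) with Z(0) = 0, c, c_max ≥ 0 and α(t) ∈ {0,1}. If Z(t)/t → 0 as t → ∞, then limsup_{T→∞} (1/T) ∑_{t=0}^{T-1} c·α(t) ≤ c_max. -/
theorem stmt_2 (Z α : ℕ → ℝ) (c c_max : ℝ) (hc : 0 ≤ c) (hcmax : 0 ≤ c_max)
    (hZ0 : Z 0 = 0)
    (hα : ∀ t, α t = 0 ∨ α t = 1)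
    (hZ : ∀ t, Z (t + 1) = max (Z t - c_max) 0 + c * α t)
    (hrate : Filter.Tendsto (fun t : ℕ => Z t / t) Filter.atTop (nhds 0)) :
    Filter.limsup (fun T : ℕ => (∑ t ∈ Finset.range T, c * α t) / T) Filter.atTop ≤ c_max := by
  have key : ∀ T : ℕ, (∑ t ∈ Finset.range T, c * α t) ≤ Z T + T * c_max := by
    intro T
    induction T with
    | zero => simp [hZ0]
    | succ T ih =>
      rw [Finset.sum_range_succ]
      have h1 : Z T - c_max ≤ max (Z T - c_max) 0 := le_max_left _ _
      have := hZ T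
      push_cast
      nlinarith
  have hnonneg : ∀ T : ℕ, 0 ≤ (∑ t ∈ Finset.range T, c * α t) / T := by
    intro T
    apply div_nonneg _ (Nat.cast_nonneg T)
    apply Finset.sum_nonneg
    intro t _
    rcases hα t with h | h <;> simp [h, hc]
  have hg : Filter.Tendsto (fun T : ℕ => Z T / T + c_max) Filter.atTop (nhds c_max) := by
    have := hrate.add (tendsto_const_nhds (x := c_max))
    simpa using this
  have hev : (fun T : ℕ => (∑ t ∈ Finset.range T, c * α t) / T) ≤ᶠ[Filter.atTop]
      (fun T : ℕ => Z T / T + c_max) := by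
    filter_upwards [Filter.eventually_ge_atTop 1] with T hT
    have hTpos : (0 : ℝ) < T := by exact_mod_cast hT
    rw [div_add' _ _ _ (ne_of_gt hTpos)]
    gcongr
    linarith [key T]
  calc Filter.limsup (fun T : ℕ => (∑ t ∈ Finset.range T, c * α t) / T) Filter.atTop
      ≤ Filter.limsup (fun T : ℕ => Z T / T + c_max) Filter.atTop := by
        refine Filter.limsup_le_limsup hev ?_ ?_
        · exact Filter.IsCoboundedUnder.of_frequently_ge
            (Filter.Frequently.of_forall hnonneg)
        · exact hg.isBoundedUnder_le
    _ = c_max := hg.limsup_eq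
end

section
/- Suppose for all t, E[L(Z(t+1)) - L(Z(t))] + W·E[g(t)] ≤ B + W·g_opt, where L(z) = z²/2, Z(0) = 0, W > 0, B ≥ 0, g(t) ≥ 0, and g_opt ≥ 0. Then limsup_{T→∞} (1/T) ∑_{t=0}^{T-1} E[g(t)] ≤ g_opt + B/W, and E[Z(T)²] ≤ 2T(B + W·g_opt), so E[Z(T)]/T → 0. -/
/-- Abstract drift-plus-penalty theorem. `EZ2 t` models `E[Z(t)²]`, `EZ t` models
`E[Z(t)]` (with `E[Z(t)] ≤ √E[Z(t)²]` by Jensen), `Eg t` models `E[g(t)]`,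
and `L(z) = z²/2` so `E[L(Z(t))] = EZ2 t / 2`. -/
theorem stmt_5 (Eg EZ2 EZ : ℕ → ℝ) (W B g_opt : ℝ)
    (hW : 0 < W) (hB : 0 ≤ B) (hgopt : 0 ≤ g_opt)
    (hEg : ∀ t, 0 ≤ Eg t)
    (hEZ2 : ∀ t, 0 ≤ EZ2 t) (hEZ20 : EZ2 0 = 0)
    (hEZnn : ∀ t, 0 ≤ EZ t)
    (hJensen : ∀ t, EZ t ≤ Real.sqrt (EZ2 t))
    (hdrift : ∀ t, (EZ2 (t + 1) / 2 - EZ2 t / 2) + W * Eg t ≤ B + W * g_opt) :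
    Filter.limsup (fun T : ℕ => (∑ t ∈ Finset.range T, Eg t) / T) Filter.atTop
        ≤ g_opt + B / W ∧
      (∀ T : ℕ, EZ2 T ≤ 2 * T * (B + W * g_opt)) ∧
      Filter.Tendsto (fun T : ℕ => EZ T / T) Filter.atTop (nhds 0) := by
  set C : ℝ := B + W * g_opt with hCdef
  have hC : 0 ≤ C := by positivity
  -- telescoping
  have tele : ∀ T : ℕ, EZ2 T / 2 + W * ∑ t ∈ Finset.range T, Eg t ≤ T * C := by
    intro T
    induction T with
    | zero => simp [hEZ20]
    | succ n ih =>
      have h := hdrift n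
      rw [Finset.sum_range_succ]
      push_cast
      nlinarith [h, ih]
  have part2 : ∀ T : ℕ, EZ2 T ≤ 2 * T * C := by
    intro T
    have h := tele T
    have hsum : 0 ≤ ∑ t ∈ Finset.range T, Eg t :=
      Finset.sum_nonneg fun t _ => hEg t
    nlinarith
  have hbound : ∀ᶠ T : ℕ in Filter.atTop,
      (∑ t ∈ Finset.range T, Eg t) / (T : ℝ) ≤ g_opt + B / W := by
    filter_upwards [Filter.eventually_ge_atTop 1] with T hT
    have hTpos : (0:ℝ) < T := by exact_mod_cast hT
    have h := tele T
    have hZ := hEZ2 T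
    rw [div_le_iff₀ hTpos]
    have : (g_opt + B / W) * T = T * C / W := by
      field_simp [hCdef]; ring
    rw [this, le_div_iff₀ hW]
    nlinarith
  have part1 : Filter.limsup (fun T : ℕ => (∑ t ∈ Finset.range T, Eg t) / T)
      Filter.atTop ≤ g_opt + B / W := by
    apply Filter.limsup_le_of_le _ hbound
    refine Filter.IsBoundedUnder.isCoboundedUnder_le ⟨0, Filter.eventually_map.2 ?_⟩
    filter_upwards with T
    exact div_nonneg (Finset.sum_nonneg fun t _ => hEg t) (Nat.cast_nonneg T)
  refine ⟨part1, part2, ?_⟩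
  -- squeeze for EZ T / T
  have hupper : ∀ T : ℕ, EZ T / T ≤ Real.sqrt (2 * C) / Real.sqrt T := by
    intro T
    rcases Nat.eq_zero_or_pos T with h0 | hT
    · simp [h0]
    · have hTpos : (0:ℝ) < T := by exact_mod_cast hT
      have h1 : EZ T ≤ Real.sqrt (2 * T * C) :=
        (hJensen T).trans (Real.sqrt_le_sqrt (part2 T))
      have h2 : Real.sqrt (2 * T * C) = Real.sqrt (2 * C) * Real.sqrt T := by
        rw [← Real.sqrt_mul (by positivity)]
        ring_nf
      have hsT : (0:ℝ) < Real.sqrt T := Real.sqrt_pos.mpr hTpos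
      rw [div_le_div_iff₀ hTpos hsT]
      calc EZ T * Real.sqrt T ≤ Real.sqrt (2 * C) * Real.sqrt T * Real.sqrt T := by
            nlinarith [h1, h2, hsT.le, hEZnn T]
        _ = Real.sqrt (2 * C) * T := by
            rw [mul_assoc, Real.mul_self_sqrt hTpos.le]
  have htend : Filter.Tendsto (fun T : ℕ => Real.sqrt (2 * C) / Real.sqrt T)
      Filter.atTop (nhds 0) := by
    apply Filter.Tendsto.div_atTop tendsto_const_nhds
    have hs : Filter.Tendsto Real.sqrt Filter.atTop Filter.atTop := by
      refine Filter.tendsto_atTop_atTop.2 fun b => ⟨(max b 0) ^ 2, fun x hx => ?_⟩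
      calc b ≤ max b 0 := le_max_left b 0
        _ = Real.sqrt ((max b 0) ^ 2) := (Real.sqrt_sq (le_max_right b 0)).symm
        _ ≤ Real.sqrt x := Real.sqrt_le_sqrt hx
    exact hs.comp tendsto_natCast_atTop_atTop
  exact squeeze_zero (fun T => div_nonneg (hEZnn T) (Nat.cast_nonneg T)) hupper htend
end
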